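/- Let M be an n×n matrix with Im M := (M − M*)/(2i) positive definite (so M is invertible). Then the matrix S = I − 2i √(Im M) · M^{-1} · √(Im M) is unitary. -/

import Mathlib

noncomputable section
open Matrix
open scoped ComplexOrder

/-- The positive semidefinite square root of a positive semidefinite matrix
(the definition `Matrix.PosSemidef.sqrt` of the older Mathlib, since removed). -/
noncomputable def Matrix.PosSemidef.sqrt {n 𝕜 : Type*} [Fintype n] [RCLike 𝕜] [DecidableEq n]
    {A : Matrix n n 𝕜} (hA : A.PosSemidef) : Matrix n n 𝕜 :=
  hA.1.eigenvectorUnitary.1 * diagonal ((↑) ∘ (√·) ∘ hA.1.eigenvalues) *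
  (star hA.1.eigenvectorUnitary : Matrix n n 𝕜)

theorem Matrix.PosSemidef.posSemidef_sqrt' {n : Type*} [Fintype n] [DecidableEq n]
    {A : Matrix n n ℂ} (hA : A.PosSemidef) : hA.sqrt.PosSemidef := by
  unfold Matrix.PosSemidef.sqrt
  have hD : (diagonal (((↑) ∘ (√·) ∘ hA.1.eigenvalues) : n → ℂ)).PosSemidef := by
    rw [Matrix.posSemidef_diagonal_iff]
    intro i
    simp only [Function.comp_apply]
    exact_mod_cast Real.sqrt_nonneg _
  simpa [Matrix.star_eq_conjTranspose] using
    hD.mul_mul_conjTranspose_same (hA.1.eigenvectorUnitary.1 : Matrix n n ℂ)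

theorem Matrix.PosSemidef.sqrt_mul_self' {n : Type*} [Fintype n] [DecidableEq n]
    {A : Matrix n n ℂ} (hA : A.PosSemidef) : hA.sqrt * hA.sqrt = A := by
  unfold Matrix.PosSemidef.sqrt
  conv_rhs => rw [hA.1.spectral_theorem, Unitary.conjStarAlgAut_apply]
  have hU : (star hA.1.eigenvectorUnitary : Matrix n n ℂ) * hA.1.eigenvectorUnitary.1 = 1 :=
    Unitary.coe_star_mul_self _
  have hd : diagonal (((↑) ∘ (√·) ∘ hA.1.eigenvalues) : n → ℂ) *
      diagonal (((↑) ∘ (√·) ∘ hA.1.eigenvalues) : n → ℂ) =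
      diagonal (RCLike.ofReal ∘ hA.1.eigenvalues) := by
    rw [diagonal_mul_diagonal]
    congr 1
    funext i
    simp only [Function.comp_apply]
    rw [← Complex.ofReal_mul, Real.mul_self_sqrt (hA.eigenvalues_nonneg i)]
    rfl
  calc _ = (hA.1.eigenvectorUnitary.1 : Matrix n n ℂ) *
        (diagonal (((↑) ∘ (√·) ∘ hA.1.eigenvalues) : n → ℂ) *
        ((star hA.1.eigenvectorUnitary : Matrix n n ℂ) * hA.1.eigenvectorUnitary.1) *
        diagonal (((↑) ∘ (√·) ∘ hA.1.eigenvalues) : n → ℂ)) *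
        (star hA.1.eigenvectorUnitary : Matrix n n ℂ) := by simp only [Matrix.mul_assoc]; rfl
    _ = _ := by rw [hU, Matrix.mul_one, hd]

attribute [local irreducible] Matrix.PosSemidef.sqrt

/-- Let `M` be a complex `n×n` matrix whose imaginary part `Im M = (M - M*)/(2i)` is
positive definite (so `M` is invertible).  Then
`S = I - 2i √(Im M) M⁻¹ √(Im M)` is unitary. -/
theorem scattering_matrix_unitary (n : ℕ) (M : Matrix (Fin n) (Fin n) ℂ)
    (hM : ((2 * Complex.I)⁻¹ • (M - Mᴴ)).PosDef) :
    (1 - (2 * Complex.I) • (hM.posSemidef.sqrt * M⁻¹ * hM.posSemidef.sqrt))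
      ∈ Matrix.unitaryGroup (Fin n) ℂ := by
  set Q := hM.posSemidef.sqrt with hQdef
  have hQH : Qᴴ = Q := hM.posSemidef.posSemidef_sqrt'.1
  have hQQ : Q * Q = (2 * Complex.I)⁻¹ • (M - Mᴴ) := hM.posSemidef.sqrt_mul_self'
  -- M is invertible
  have hdet : IsUnit M.det := by
    rw [isUnit_iff_ne_zero]
    intro h0
    obtain ⟨v, hv, hMv⟩ := (Matrix.exists_mulVec_eq_zero_iff).2 h0
    have key : star v ⬝ᵥ (((2 * Complex.I)⁻¹ • (M - Mᴴ)) *ᵥ v) = 0 := by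
      have h1 : star v ⬝ᵥ (Mᴴ *ᵥ v) = 0 := by
        rw [Matrix.dotProduct_mulVec, ← Matrix.star_mulVec, hMv]
        simp
      have h2 : star v ⬝ᵥ (M *ᵥ v) = 0 := by rw [hMv]; simp
      rw [Matrix.smul_mulVec, Matrix.sub_mulVec, dotProduct_smul,
        dotProduct_sub, h1, h2]
      simp
    exact absurd key (ne_of_gt (hM.dotProduct_mulVec_pos hv))
  have hMA : M * M⁻¹ = 1 := Matrix.mul_nonsing_inv M hdet
  have hAM : M⁻¹ * M = 1 := Matrix.nonsing_inv_mul M hdet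
  have hdetH : IsUnit Mᴴ.det := by
    rw [Matrix.det_conjTranspose]
    exact hdet.star
  have hNM : Mᴴ⁻¹ * Mᴴ = 1 := Matrix.nonsing_inv_mul Mᴴ hdetH
  have hMN : Mᴴ * Mᴴ⁻¹ = 1 := Matrix.mul_nonsing_inv Mᴴ hdetH
  set A := M⁻¹ with hAdef
  set N := Mᴴ⁻¹ with hNdef
  rw [Matrix.mem_unitaryGroup_iff]
  have hstar : star (1 - (2 * Complex.I) • (Q * A * Q))
      = 1 + (2 * Complex.I) • (Q * N * Q) := by
    have : star ((2 * Complex.I) • (Q * A * Q)) = (-(2 * Complex.I)) • (Q * N * Q) := by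
      rw [Matrix.star_eq_conjTranspose, Matrix.conjTranspose_smul]
      congr 1
      · simp [Complex.ext_iff]
      · rw [Matrix.conjTranspose_mul, Matrix.conjTranspose_mul, hQH,
          hAdef, Matrix.conjTranspose_nonsing_inv, mul_assoc]
    rw [star_sub, star_one, this, neg_smul, sub_neg_eq_add]
  rw [hstar]
  -- key product identity
  have hkey : (Q * A * Q) * (Q * N * Q)
      = (2 * Complex.I)⁻¹ • (Q * N * Q) - (2 * Complex.I)⁻¹ • (Q * A * Q) := by
    have hmid : A * (Q * Q) * N = (2 * Complex.I)⁻¹ • (N - A) := by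
      rw [hQQ, Matrix.mul_smul, Matrix.smul_mul]
      congr 1
      rw [mul_sub, sub_mul, hAM, one_mul, mul_assoc, hMN, mul_one]
    calc (Q * A * Q) * (Q * N * Q) = Q * (A * (Q * Q) * N) * Q := by
          simp only [mul_assoc]
      _ = (2 * Complex.I)⁻¹ • (Q * (N - A) * Q) := by
          rw [hmid, Matrix.mul_smul, Matrix.smul_mul]
      _ = _ := by rw [mul_sub, sub_mul, smul_sub]
  have hc : (2 * Complex.I) * (2 * Complex.I) = -4 := by
    simp [Complex.ext_iff]; ring
  have h1 : (-4 : ℂ) * (2 * Complex.I)⁻¹ = 2 * Complex.I := by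
    field_simp
    simp [Complex.ext_iff]; norm_num
  have hprod : ((2 * Complex.I) • (Q * A * Q)) * ((2 * Complex.I) • (Q * N * Q))
      = (2 * Complex.I) • (Q * N * Q) - (2 * Complex.I) • (Q * A * Q) := by
    rw [Matrix.smul_mul, Matrix.mul_smul, smul_smul, hc, hkey, smul_sub,
      smul_smul, smul_smul, h1]
  rw [sub_mul, one_mul, mul_add, mul_one, hprod]
  abel

end
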